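/- arXiv:1901.07872 — 2 statements merged into one kernel-verified Lean document; each statement's English description precedes it below -/
import Mathlib

section
/- Any inner deformation of a locally finite formal family of A∞-structures is locally finite: if m is a locally finite formal n-parameter family of A∞-structures on V (parameters of even degrees) and ñ ∈ W[[t_1,…,t_n,t_0]] is the unique formal solution of ∂ñ/∂t_0 = Δ[ñ] with ñ|_{t_0=0} = m for a cup polynomial Δ, then for every monomial t_0^{α_0} t^α there is a finite N such that the coefficient of t_0^{α_0} t^α in ñ lies in ⊕_{p=0}^{N} Hom(V^{⊗p},V). -/
namespace Ainf

variable (k : Type*) [Field k] [CharZero k]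
variable (V : ℤ → Type*) [∀ l, AddCommGroup (V l)] [∀ l, Module k (V l)]

/-- Homogeneous elements of `V`, tagged with their degree. -/
abbrev HV := Σ l : ℤ, V l

/-- Total degree of a list of homogeneous elements. -/
def degSum (vs : List (HV V)) : ℤ := (vs.map Sigma.fst).sum

/-- Cast between homogeneous components (junk value `0` if the degrees differ;
in all intended uses the degrees provably agree). -/
def vcast {a b : ℤ} (x : V a) : V b := if h : a = b then h ▸ x else 0

/-- A homogeneous degree-`d` element of `Hom(T(V),V)`, encoded by its values on
tuples (lists) of homogeneous elements of `V`. -/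
abbrev E (d : ℤ) := (vs : List (HV V)) → V (d + degSum V vs)

/-- Multilinearity (over `k`, in each slot) of a graded map: this singles out the
elements of `W = Hom(T(V),V)` among all functions on homogeneous tuples. -/
def IsMultilinear {d : ℤ} (f : E V d) : Prop :=
  (∀ (xs zs : List (HV V)) (l : ℤ) (x y : V l),
      (vcast V (f (xs ++ ⟨l, x + y⟩ :: zs)) : V (d + degSum V xs + l + degSum V zs)) =
        vcast V (f (xs ++ ⟨l, x⟩ :: zs)) + vcast V (f (xs ++ ⟨l, y⟩ :: zs))) ∧
  (∀ (xs zs : List (HV V)) (l : ℤ) (c : k) (x : V l),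
      (vcast V (f (xs ++ ⟨l, c • x⟩ :: zs)) : V (d + degSum V xs + l + degSum V zs)) =
        c • vcast V (f (xs ++ ⟨l, x⟩ :: zs)))

/-- All splittings of a list into two consecutive parts. -/
def splits2 {α : Type*} (vs : List α) : List (List α × List α) :=
  (List.range (vs.length + 1)).map fun i => (vs.take i, vs.drop i)

/-- All splittings of a list into three consecutive parts. -/
def splits3 {α : Type*} (vs : List α) : List (List α × List α × List α) :=
  (splits2 vs).flatMap fun p => (splits2 p.2).map fun q => (p.1, q.1, q.2)

/-- The Gerstenhaber composition product
`(f∘g)(v₁,…) = Σᵢ (−1)^{|g|(|v₁|+⋯+|vᵢ|)} f(v₁,…,vᵢ,g(v_{i+1},…),…)`. -/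
def gcomp {a b : ℤ} (f : E V a) (g : E V b) : E V (a + b) := fun vs =>
  ((splits3 vs).map fun p =>
    ((-1 : k) ^ (b * degSum V p.1)) •
      vcast V (f (p.1 ++ ⟨b + degSum V p.2.1, g p.2.1⟩ :: p.2.2))).sum

/-- Degree recast of a graded map (junk when the degrees differ). -/
def recast {a b : ℤ} (f : E V a) : E V b := fun vs => vcast V (f vs)

/-- The Gerstenhaber bracket `[f,g] = f∘g − (−1)^{|f||g|} g∘f`. -/
def gbr {a b : ℤ} (f : E V a) (g : E V b) : E V (a + b) :=
  gcomp k V f g - ((-1 : k) ^ (a * b)) • recast V (gcomp k V g f)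

/-- A homogeneous element of `W`, packaged with its degree. -/
abbrev GE := Σ d : ℤ, E V d

/-- Total degree of a list of homogeneous elements of `W`. -/
def degl (As : List (GE V)) : ℤ := (As.map Sigma.fst).sum

/-- Auxiliary enumeration of all ordered disjoint insertions of the operations `Bs`
into a tuple `vs`, together with the Koszul sign exponents
`ε = Σᵢ |Bᵢ|(|v₁|+⋯+|v_{kᵢ}|)`. -/
def ins : List (GE V) → List (HV V) → List (ℤ × List (HV V))
  | [], vs => [(0, vs)]
  | B :: Bs, vs =>
    (splits3 vs).flatMap fun p =>
      (ins Bs p.2.2).map fun q =>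
        (B.1 * degSum V p.1 + degl V Bs * (degSum V p.1 + degSum V p.2.1) + q.1,
          p.1 ++ ⟨B.1 + degSum V p.2.1, B.2 p.2.1⟩ :: q.2)

/-- The brace operations `A{A₁,…,Aₚ}`. -/
def braces {a : ℤ} (A : E V a) (As : List (GE V)) : E V (a + degl V As) := fun vs =>
  ((ins V As vs).map fun q => ((-1 : k) ^ q.1) • vcast V (A q.2)).sum

section PowerSeries

variable (ι : Type*) [Fintype ι] [DecidableEq ι] (td : ι → ℤ)

/-- Multi-indices (exponents of the formal variables). -/
abbrev MI := ι → ℕ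

/-- Total internal degree `Σᵢ αᵢ·|tᵢ|` of the monomial `t^α`. -/
def degM (α : MI ι) : ℤ := ∑ i, (α i : ℤ) * td i

/-- A homogeneous degree-`d` element of `W[[t₁,…]]`: the coefficient of `t^α` is a
homogeneous element of `W` of degree `d − deg t^α`. -/
abbrev PS (d : ℤ) := (α : MI ι) → E V (d - degM ι td α)

/-- The multi-indices `β ≤ α` (the possible left factors in a decomposition `α = β + γ`). -/
def below (α : MI ι) : Finset (MI ι) :=
  Fintype.piFinset fun i => Finset.range (α i + 1)

/-- Coefficientwise degree recast on power series. -/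
def precast {a b : ℤ} (F : PS V ι td a) : PS V ι td b := fun α => recast V (F α)

/-- The composition product on `W[[t]]`, extended coefficientwise (Cauchy product). -/
def pcomp {a b : ℤ} (F : PS V ι td a) (G : PS V ι td b) : PS V ι td (a + b) := fun α =>
  ∑ β ∈ below ι α, recast V (gcomp k V (F β) (G (α - β)))

/-- The Gerstenhaber bracket on `W[[t]]`. -/
def pbr {a b : ℤ} (F : PS V ι td a) (G : PS V ι td b) : PS V ι td (a + b) :=
  pcomp k V ι td F G - ((-1 : k) ^ (a * b)) • precast V ι td (pcomp k V ι td G F)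

/-- Formal partial derivative `∂F/∂tᵢ` of a power series. -/
def pderiv {d : ℤ} (F : PS V ι td d) (i : ι) : PS V ι td (d - td i) := fun α =>
  ((α i + 1 : ℕ) : k) • recast V (F (α + Pi.single i 1))

/-- The differential `M₁(A) = m∘A − (−1)^{|A|}A∘m` on `W[[t]]`. -/
def pM1 (m : PS V ι td 1) {a : ℤ} (A : PS V ι td a) : PS V ι td (a + 1) :=
  precast V ι td (pcomp k V ι td m A) -
    ((-1 : k) ^ a) • precast V ι td (pcomp k V ι td A m)

/-- The binary brace `m{A,B}` on `W[[t]]`, extended coefficientwise. -/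
def pbr2 (m : PS V ι td 1) {a b : ℤ} (A : PS V ι td a) (B : PS V ι td b) :
    PS V ι td (a + b + 1) := fun α =>
  ∑ β ∈ below ι α, ∑ γ ∈ below ι (α - β),
    recast V (braces k V (m β)
      [⟨a - degM ι td γ, A γ⟩, ⟨b - degM ι td (α - β - γ), B (α - β - γ)⟩])

/-- The cup product `A ∪ B = (−1)^{|A|−1} m{A,B}` on `W[[t]]`. -/
def pcup (m : PS V ι td 1) {a b : ℤ} (A : PS V ι td a) (B : PS V ι td b) :
    PS V ι td (a + b + 1) :=
  ((-1 : k) ^ (a - 1)) • pbr2 k V ι td m A B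

end PowerSeries

section CupPolynomial

variable (ι : Type*) [Fintype ι] [DecidableEq ι] (td : ι → ℤ)

/-- Left-to-right iterated cup product `m₍i₀₎ ∪ m₍i₁₎ ∪ ⋯ ∪ m₍i_l₎` of partial
derivatives of a family `m`, together with its degree. -/
def cupIter (m : PS V ι td 1) (i0 : ι) (rest : List ι) : Σ d : ℤ, PS V ι td d :=
  rest.foldl
    (fun acc i => ⟨acc.1 + (1 - td i) + 1, pcup k V ι td m acc.2 (pderiv k V ι td m i)⟩)
    ⟨1 - td i0, pderiv k V ι td m i0⟩

/-- Cauchy product of a power series in `W[[t]]` with a scalar power series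
`c ∈ k[[t]]`, recast to a prescribed target degree `e` (the recast is the identity
in all intended uses, where `c` is homogeneous of degree `e − deg A`). -/
def csmul (c : MI ι → k) {a : ℤ} (A : PS V ι td a) (e : ℤ) : PS V ι td e := fun α =>
  ∑ β ∈ below ι α, c β • recast V (A (α - β))

/-- Evaluation `Δ[m] = Σ c^{i₁⋯i_l}· m₍i₁₎ ∪ ⋯ ∪ m₍i_l₎` of a cup polynomial, given by a
finite list of terms `(c, i₁, [i₂,…,i_l])`, on a family `m`; the result is collected in
degree `δ`. -/
def deltaEval (m : PS V ι td 1) (δ : ℤ) (ts : List ((MI ι → k) × ι × List ι)) :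
    PS V ι td δ :=
  (ts.map fun t => csmul k V ι td t.1 (cupIter k V ι td m t.2.1 t.2.2).2 δ).sum

/-- Homogeneity of the coefficients of a cup polynomial: each scalar series
`c^{i₁⋯i_l}` is homogeneous of the degree making its term have total degree `δ`. -/
def CoeffHomog (m : PS V ι td 1) (δ : ℤ) (ts : List ((MI ι → k) × ι × List ι)) : Prop :=
  ∀ t ∈ ts, ∀ β : MI ι,
    degM ι td β ≠ δ - (cupIter k V ι td m t.2.1 t.2.2).1 → t.1 β = 0

end CupPolynomial

section InnerDeformation

variable {n : ℕ} (td : Fin n → ℤ) (δ : ℤ)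

/-- Degrees of the formal variables `t₀, t₁, …, tₙ`, where the new variable `t₀` has
degree `1 − δ`. -/
def tdx : Fin (n + 1) → ℤ := Fin.cons (1 - δ) td

/-- Lift of a scalar power series in `t₁,…,tₙ` to one in `t₀,t₁,…,tₙ`. -/
def liftC (c : (Fin n → ℕ) → k) : (Fin (n + 1) → ℕ) → k := fun β =>
  if β 0 = 0 then c (fun i => β i.succ) else 0

/-- Lift of a cup-polynomial term from `n` to `n+1` formal variables. -/
def liftTerm (t : ((Fin n → ℕ) → k) × Fin n × List (Fin n)) :
    ((Fin (n + 1) → ℕ) → k) × Fin (n + 1) × List (Fin (n + 1)) :=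
  (liftC k t.1, t.2.1.succ, t.2.2.map Fin.succ)

/-- `g ∈ W[[t₀,t₁,…,tₙ]]` solves the inner-deformation problem for the family `m` and
the cup polynomial `Δ` (given by the terms `ts`): the initial condition `g|_{t₀=0} = m`
and the differential equation `∂g/∂t₀ = Δ[g]` hold. -/
def IsSol (m : PS V (Fin n) td 1) (ts : List (((Fin n → ℕ) → k) × Fin n × List (Fin n)))
    (g : PS V (Fin (n + 1)) (tdx td δ) 1) : Prop :=
  (∀ α : Fin n → ℕ, g (Fin.cons 0 α) = recast V (m α)) ∧
  pderiv k V (Fin (n + 1)) (tdx td δ) g 0 =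
    precast V (Fin (n + 1)) (tdx td δ)
      (deltaEval k V (Fin (n + 1)) (tdx td δ) g δ (ts.map (liftTerm k)))

end InnerDeformation

/-- A family is locally finite if each coefficient vanishes on all tuples of
sufficiently large length, i.e. lies in `⊕_{p≤N} Hom(V^{⊗p},V)`. -/
def LocFin (ι : Type*) [Fintype ι] [DecidableEq ι] (td : ι → ℤ) {d : ℤ}
    (m : PS V ι td d) : Prop :=
  ∀ β : MI ι, ∃ N : ℕ, ∀ vs : List (HV V), N < vs.length → m β vs = 0
end Ainf

/-!
The proof tracks a class of graded maps larger than the locally finite ones but stable under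
everything a cup polynomial does: maps that vanish beyond some arity *and* vanish as soon as one
argument is `0`. The second condition is what makes brace operations preserve the first: if a
long tuple is fed to `A{B₁,…,Bₚ}`, then in each insertion either `A` receives a long tuple, or
some `Bᵢ` does and returns `0`, which `A` then receives as an argument. The coefficients of `g`
with `t₀`-exponent `0` are those of `m`, which lie in this class by multilinearity and local
finiteness. Since `Δ` only differentiates in `t₁,…,tₙ`, the coefficient of `t₀^a` in
`Δ[g]` involves only coefficients of `g` with `t₀`-exponent at most `a`, so `∂g/∂t₀ = Δ[g]`
(and characteristic zero) propagates the class by induction on the `t₀`-exponent.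
-/

namespace Ainf

section Finitary

variable (k : Type*) [Field k]
variable (V : ℤ → Type*) [∀ l, AddCommGroup (V l)] [∀ l, Module k (V l)]

def VanishesOnZeroSlot {d : ℤ} (f : E V d) : Prop :=
  ∀ (vs : List (HV V)) (l : ℤ), (⟨l, 0⟩ : HV V) ∈ vs → f vs = 0

def HasFiniteArity {d : ℤ} (f : E V d) : Prop :=
  ∃ N : ℕ, ∀ vs : List (HV V), N < vs.length → f vs = 0

def finitary (d : ℤ) : Submodule k (E V d) where
  carrier := {f | VanishesOnZeroSlot V f ∧ HasFiniteArity V f}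
  zero_mem' := ⟨fun _ _ _ => rfl, 0, fun _ _ => rfl⟩
  add_mem' := by
    rintro f g ⟨hf0, Nf, hf⟩ ⟨hg0, Ng, hg⟩
    refine ⟨fun vs l hl => ?_, max Nf Ng, fun vs hvs => ?_⟩
    · simp [hf0 vs l hl, hg0 vs l hl]
    · simp [hf vs (by omega), hg vs (by omega)]
  smul_mem' := by
    rintro c f ⟨hf0, N, hf⟩
    exact ⟨fun vs l hl => by simp [hf0 vs l hl], N, fun vs hvs => by simp [hf vs hvs]⟩

variable {k V}

lemma HasFiniteArity.eventually {d : ℤ} {f : E V d} (hf : HasFiniteArity V f) :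
    ∀ᶠ N in Filter.atTop, ∀ vs : List (HV V), N < vs.length → f vs = 0 := by
  obtain ⟨N, hN⟩ := hf
  exact Filter.eventually_atTop.2 ⟨N, fun M hM vs hvs => hN vs (lt_of_le_of_lt hM hvs)⟩

lemma vcast_zero {a b : ℤ} : (vcast V (0 : V a) : V b) = 0 := by
  unfold vcast
  split_ifs with h
  · subst h; rfl
  · rfl

lemma eq_zero_of_vcast_eq_zero {a b : ℤ} (h : a = b) {x : V a} (hx : (vcast V x : V b) = 0) :
    x = 0 := by
  subst h
  simpa [vcast] using hx

lemma recast_mem_finitary {a b : ℤ} {f : E V a} (hf : f ∈ finitary k V a) :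
    (recast V f : E V b) ∈ finitary k V b := by
  obtain ⟨hf0, N, hf⟩ := hf
  exact ⟨fun vs l hl => by simp [recast, hf0 vs l hl, vcast_zero],
    N, fun vs hvs => by simp [recast, hf vs hvs, vcast_zero]⟩

lemma mem_finitary_of_vanishing {a b : ℤ} {f : E V a} {g : E V b} (hg : g ∈ finitary k V b)
    (h : ∀ vs, g vs = 0 → f vs = 0) : f ∈ finitary k V a := by
  obtain ⟨hg0, N, hg⟩ := hg
  exact ⟨fun vs l hl => h vs (hg0 vs l hl), N, fun vs hvs => h vs (hg vs hvs)⟩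

lemma IsMultilinear.vanishesOnZeroSlot {d : ℤ} {f : E V d} (hf : IsMultilinear k V f) :
    VanishesOnZeroSlot V f := by
  intro vs l hl
  obtain ⟨xs, zs, rfl⟩ := List.append_of_mem hl
  have h := hf.2 xs zs l 0 0
  rw [smul_zero, zero_smul] at h
  exact eq_zero_of_vcast_eq_zero (by simp [degSum]; ring) h

end Finitary

lemma append_of_mem_splits3 {α : Type*} {p : List α × List α × List α} {vs : List α}
    (h : p ∈ splits3 vs) : p.1 ++ p.2.1 ++ p.2.2 = vs := by
  simp only [splits3, splits2, List.mem_flatMap, List.mem_map, List.mem_range] at h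
  obtain ⟨_, ⟨i, -, rfl⟩, _, ⟨j, -, rfl⟩, rfl⟩ := h
  simp

section Braces

variable {k : Type*} [Field k]
variable {V : ℤ → Type*} [∀ l, AddCommGroup (V l)] [∀ l, Module k (V l)]

lemma exists_zero_mem_of_mem_ins {Bs : List (GE V)} (hBs : ∀ B ∈ Bs, VanishesOnZeroSlot V B.2)
    {vs : List (HV V)} {l : ℤ} (hl : (⟨l, 0⟩ : HV V) ∈ vs) :
    ∀ q ∈ ins V Bs vs, ∃ l' : ℤ, (⟨l', 0⟩ : HV V) ∈ q.2 := by
  induction Bs generalizing vs with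
  | nil => simpa [ins] using ⟨l, hl⟩
  | cons B Bs ih =>
    simp only [ins, List.mem_flatMap, List.mem_map]
    rintro _ ⟨⟨p₁, p₂, p₃⟩, hp, q, hq, rfl⟩
    rw [← append_of_mem_splits3 hp] at hl
    simp only [List.mem_append] at hl
    rcases hl with (h₁ | h₂) | h₃
    · exact ⟨l, by simp [h₁]⟩
    · refine ⟨B.1 + degSum V p₂, ?_⟩
      rw [hBs B List.mem_cons_self p₂ l h₂]
      simp
    · obtain ⟨l', hl'⟩ := ih (fun B' hB' => hBs B' (List.mem_cons_of_mem _ hB')) h₃ q hq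
      exact ⟨l', by simp [hl']⟩

lemma exists_zero_mem_or_length_le_of_mem_ins {Bs : List (GE V)} {N : ℕ}
    (hBs : ∀ B ∈ Bs, ∀ ws : List (HV V), N < ws.length → B.2 ws = 0) (vs : List (HV V)) :
    ∀ q ∈ ins V Bs vs,
      (∃ l : ℤ, (⟨l, 0⟩ : HV V) ∈ q.2) ∨ vs.length ≤ q.2.length + Bs.length * N := by
  induction Bs generalizing vs with
  | nil => simp [ins]
  | cons B Bs ih =>
    simp only [ins, List.mem_flatMap, List.mem_map]
    rintro _ ⟨⟨p₁, p₂, p₃⟩, hp, q, hq, rfl⟩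
    have hlen := congrArg List.length (append_of_mem_splits3 hp)
    simp only [List.length_append] at hlen
    by_cases hlong : N < p₂.length
    · refine Or.inl ⟨B.1 + degSum V p₂, ?_⟩
      rw [hBs B List.mem_cons_self p₂ hlong]
      simp
    rcases ih (fun B' hB' => hBs B' (List.mem_cons_of_mem _ hB')) p₃ q hq with ⟨l, hl⟩ | hq₃
    · exact Or.inl ⟨l, by simp [hl]⟩
    · right
      simp only [List.length_append, List.length_cons, Nat.succ_mul] at hq₃ ⊢
      omega

lemma braces_mem_finitary {a : ℤ} {A : E V a} {Bs : List (GE V)} (hA : A ∈ finitary k V a)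
    (hBs : ∀ B ∈ Bs, B.2 ∈ finitary k V B.1) :
    braces k V A Bs ∈ finitary k V (a + degl V Bs) := by
  have hsum : ∀ vs, (∀ q ∈ ins V Bs vs, A q.2 = 0) → braces k V A Bs vs = 0 := fun vs h =>
    List.sum_eq_zero <| List.forall_mem_map.2 fun q hq => by rw [h q hq, vcast_zero, smul_zero]
  obtain ⟨hA0, NA, hA⟩ := hA
  obtain ⟨N, hN⟩ :=
    (Bs.finite_toSet.eventually_all.2 fun B hB => (hBs B hB).2.eventually).exists
  refine ⟨fun vs l hl => hsum vs fun q hq => ?_, NA + Bs.length * N, fun vs hvs =>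
    hsum vs fun q hq => ?_⟩
  · obtain ⟨l', hl'⟩ := exists_zero_mem_of_mem_ins (fun B hB => (hBs B hB).1) hl q hq
    exact hA0 _ _ hl'
  · rcases exists_zero_mem_or_length_le_of_mem_ins hN vs q hq with ⟨l', hl'⟩ | hq
    · exact hA0 _ _ hl'
    · exact hA _ (by omega)

end Braces

section PowerSeries

variable (k : Type*) [Field k]
variable (V : ℤ → Type*) [∀ l, AddCommGroup (V l)] [∀ l, Module k (V l)]
variable (ι : Type*) [Fintype ι] [DecidableEq ι] (td : ι → ℤ)

def finitaryUpTo (i : ι) (a : ℕ) (d : ℤ) : Submodule k (PS V ι td d) where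
  carrier := {F | ∀ μ : MI ι, μ i ≤ a → F μ ∈ finitary k V (d - degM ι td μ)}
  zero_mem' _ _ := zero_mem _
  add_mem' hF hG μ hμ := add_mem (hF μ hμ) (hG μ hμ)
  smul_mem' c _ hF μ hμ := Submodule.smul_mem _ c (hF μ hμ)

variable {k V ι td}

lemma mem_below {α β : MI ι} : β ∈ below ι α ↔ β ≤ α := by
  simp [below, Fintype.mem_piFinset, Pi.le_def]

lemma degM_add_single (μ : MI ι) (i : ι) :
    degM ι td (μ + Pi.single i 1) = degM ι td μ + td i := by
  simp only [degM, Pi.add_apply, Nat.cast_add, add_mul, Finset.sum_add_distrib,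
    Pi.single_apply, Nat.cast_ite, Nat.cast_one, Nat.cast_zero, ite_mul, one_mul, zero_mul,
    Finset.sum_ite_eq', Finset.mem_univ, if_true]

variable {i : ι} {a : ℕ}

lemma pderiv_mem_finitaryUpTo {d : ℤ} {F : PS V ι td d} (hF : F ∈ finitaryUpTo k V ι td i a d)
    {j : ι} (hj : j ≠ i) : pderiv k V ι td F j ∈ finitaryUpTo k V ι td i a (d - td j) :=
  fun μ hμ => Submodule.smul_mem _ _ <| recast_mem_finitary <| hF _ <| by
    simpa [Pi.single_eq_of_ne hj.symm] using hμ

lemma pcup_mem_finitaryUpTo {m : PS V ι td 1} {da db : ℤ} {A : PS V ι td da}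
    {B : PS V ι td db} (hm : m ∈ finitaryUpTo k V ι td i a 1)
    (hA : A ∈ finitaryUpTo k V ι td i a da) (hB : B ∈ finitaryUpTo k V ι td i a db) :
    pcup k V ι td m A B ∈ finitaryUpTo k V ι td i a (da + db + 1) := by
  refine Submodule.smul_mem _ _ fun μ hμ => Submodule.sum_mem _ fun β hβ =>
    Submodule.sum_mem _ fun γ hγ => recast_mem_finitary <| braces_mem_finitary (hm β ?_) ?_
  all_goals
    have hβi : β i ≤ μ i := mem_below.1 hβ i
    have hγi : γ i ≤ μ i - β i := mem_below.1 hγ i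
  · omega
  · simp only [List.mem_cons, List.not_mem_nil, or_false, forall_eq_or_imp, forall_eq]
    exact ⟨hA γ (by omega), hB _ (by simp only [Pi.sub_apply]; omega)⟩

lemma csmul_mem_finitaryUpTo (c : MI ι → k) {da : ℤ} {A : PS V ι td da}
    (hA : A ∈ finitaryUpTo k V ι td i a da) (e : ℤ) :
    csmul k V ι td c A e ∈ finitaryUpTo k V ι td i a e :=
  fun μ hμ => Submodule.sum_mem _ fun β hβ =>
    have hβi : β i ≤ μ i := mem_below.1 hβ i
    Submodule.smul_mem _ _ <| recast_mem_finitary <| hA _ <| by simp only [Pi.sub_apply]; omega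

lemma cupIter_mem_finitaryUpTo {m : PS V ι td 1} (hm : m ∈ finitaryUpTo k V ι td i a 1)
    {i₀ : ι} (hi₀ : i₀ ≠ i) {rest : List ι} (hrest : ∀ j ∈ rest, j ≠ i) :
    (cupIter k V ι td m i₀ rest).2 ∈
      finitaryUpTo k V ι td i a (cupIter k V ι td m i₀ rest).1 :=
  List.foldlRecOn (motive := fun s : Σ d : ℤ, PS V ι td d => s.2 ∈ finitaryUpTo k V ι td i a s.1)
    rest _ (pderiv_mem_finitaryUpTo hm hi₀) fun _ hs j hj =>
      pcup_mem_finitaryUpTo hm hs (pderiv_mem_finitaryUpTo hm (hrest j hj))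

lemma deltaEval_mem_finitaryUpTo {m : PS V ι td 1} (hm : m ∈ finitaryUpTo k V ι td i a 1)
    (δ : ℤ) {ts : List ((MI ι → k) × ι × List ι)}
    (hts : ∀ t ∈ ts, t.2.1 ≠ i ∧ ∀ j ∈ t.2.2, j ≠ i) :
    deltaEval k V ι td m δ ts ∈ finitaryUpTo k V ι td i a δ :=
  list_sum_mem <| List.forall_mem_map.2 fun t ht =>
    csmul_mem_finitaryUpTo _ (cupIter_mem_finitaryUpTo hm (hts t ht).1 (hts t ht).2) δ

variable [CharZero k]

lemma mem_finitary_of_pderiv_mem {d : ℤ} {F : PS V ι td d} {μ : MI ι}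
    (h : pderiv k V ι td F i μ ∈ finitary k V (d - td i - degM ι td μ)) :
    F (μ + Pi.single i 1) ∈ finitary k V (d - degM ι td (μ + Pi.single i 1)) := by
  refine mem_finitary_of_vanishing h fun vs hvs => eq_zero_of_vcast_eq_zero ?_ <|
    (smul_eq_zero.1 hvs).resolve_left (Nat.cast_ne_zero.2 (Nat.succ_ne_zero _))
  rw [degM_add_single]
  ring

lemma finitaryUpTo_succ {d : ℤ} {F : PS V ι td d} (hF : F ∈ finitaryUpTo k V ι td i a d)
    (hD : ∀ μ : MI ι, μ i = a →
      pderiv k V ι td F i μ ∈ finitary k V (d - td i - degM ι td μ)) :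
    F ∈ finitaryUpTo k V ι td i (a + 1) d := by
  intro μ hμ
  rcases Nat.lt_or_eq_of_le hμ with hlt | heq
  · exact hF μ (Nat.lt_succ_iff.1 hlt)
  obtain ⟨ν, rfl⟩ : ∃ ν, μ = ν + Pi.single i 1 := by
    refine ⟨μ - Pi.single i 1, (tsub_add_cancel_of_le fun j => ?_).symm⟩
    rcases eq_or_ne j i with rfl | hj <;> simp [*]
  exact mem_finitary_of_pderiv_mem (hD ν (by simpa using heq))

end PowerSeries

variable (k : Type*) [Field k] [CharZero k]
variable (V : ℤ → Type*) [∀ l, AddCommGroup (V l)] [∀ l, Module k (V l)]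

theorem inner_deformation_locally_finite {n : ℕ} (td : Fin n → ℤ)
    (δ : ℤ)
    (m : PS V (Fin n) td 1) (hmult : ∀ α, IsMultilinear k V (m α))
    (hlf : LocFin V (Fin n) td m)
    (ts : List (((Fin n → ℕ) → k) × Fin n × List (Fin n)))
    (g : PS V (Fin (n + 1)) (tdx td δ) 1) (hg : IsSol k V td δ m ts g) :
    LocFin V (Fin (n + 1)) (tdx td δ) g := by
  have hbase : g ∈ finitaryUpTo k V _ (tdx td δ) 0 0 1 := by
    intro μ hμ
    obtain ⟨α, rfl⟩ : ∃ α, μ = Fin.cons 0 α :=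
      ⟨Fin.tail μ, by rw [← Nat.le_zero.1 hμ, Fin.cons_self_tail]⟩
    rw [hg.1]
    exact recast_mem_finitary ⟨(hmult α).vanishesOnZeroSlot, hlf α⟩
  have hlift : ∀ t ∈ ts.map (liftTerm k), t.2.1 ≠ 0 ∧ ∀ j ∈ t.2.2, j ≠ 0 := by
    rw [List.forall_mem_map]
    exact fun t _ => ⟨Fin.succ_ne_zero _, by simp [liftTerm, Fin.succ_ne_zero]⟩
  have hall : ∀ a, g ∈ finitaryUpTo k V _ (tdx td δ) 0 a 1 := by
    intro a
    induction a with
    | zero => exact hbase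
    | succ a ih =>
      refine finitaryUpTo_succ ih fun μ hμ => ?_
      rw [hg.2]
      exact recast_mem_finitary (deltaEval_mem_finitaryUpTo ih δ hlift μ hμ.le)
  exact fun β => (hall (β 0) β le_rfl).2

end Ainf
end

section
/- Let h: ℳ → 𝒜 be an injective 𝒜-bimodule homomorphism. Then h(m_1) m_2 = m_1 h(m_2) for all m_1, m_2 ∈ ℳ, and consequently the map h̃ on the trivial extension A = 𝒜 ⊕ ℳ defined by h̃(a, m) = (h(m), 0) is a graded derivation of A of degree −1 squaring to zero: h̃∘h̃ = 0 and h̃(x y) = h̃(x) y + (−1)^{p} x h̃(y) for all homogeneous x ∈ A_p and all y ∈ A. -/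
/-!
Statement 19: if `h : ℳ → 𝒜` is an injective bimodule homomorphism, then
`h(m₁)m₂ = m₁h(m₂)`, and the induced map `h̃(a,m) = (h(m),0)` on the trivial extension
`A = 𝒜 ⊕ ℳ` (with `𝒜` in degree 0 and `ℳ` in degree 1) is a graded derivation of
degree `−1` squaring to zero.
-/

namespace InnerDef

open TrivSqZeroExt

variable (k : Type*) [Field k] [CharZero k]
variable (𝒜 : Type*) [Ring 𝒜] [Algebra k 𝒜]
variable (ℳ : Type*) [AddCommGroup ℳ] [Module k ℳ]
variable [Module 𝒜 ℳ] [Module 𝒜ᵐᵒᵖ ℳ] [SMulCommClass 𝒜 𝒜ᵐᵒᵖ ℳ]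

/-- The degree `−1` map `h̃(a, m) = (h(m), 0)` on the trivial extension `A = 𝒜 ⊕ ℳ`. -/
def htilde (h : ℳ →ₗ[k] 𝒜) (x : TrivSqZeroExt 𝒜 ℳ) : TrivSqZeroExt 𝒜 ℳ :=
  TrivSqZeroExt.inl (h x.snd)

/-- Both sides have image `h m₁ * h m₂` under `h`. -/
theorem apply_smul_eq_op_apply_smul_of_injective {R M : Type*} [Mul R] [SMul R M]
    [SMul Rᵐᵒᵖ M] {h : M → R} (hleft : ∀ (a : R) (m : M), h (a • m) = a * h m)
    (hright : ∀ (a : R) (m : M), h (MulOpposite.op a • m) = h m * a)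
    (hinj : Function.Injective h) (m₁ m₂ : M) :
    h m₁ • m₂ = MulOpposite.op (h m₂) • m₁ :=
  hinj <| by rw [hleft, hright]

section

variable {k 𝒜 ℳ}

omit [CharZero k] [Module 𝒜 ℳ] [Module 𝒜ᵐᵒᵖ ℳ] [SMulCommClass 𝒜 𝒜ᵐᵒᵖ ℳ] in
theorem htilde_htilde (h : ℳ →ₗ[k] 𝒜) (x : TrivSqZeroExt 𝒜 ℳ) :
    htilde k 𝒜 ℳ h (htilde k 𝒜 ℳ h x) = 0 := by
  simp [htilde]

omit [CharZero k] [SMulCommClass 𝒜 𝒜ᵐᵒᵖ ℳ] in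
theorem htilde_inl_mul {h : ℳ →ₗ[k] 𝒜} (hleft : ∀ (a : 𝒜) (m : ℳ), h (a • m) = a * h m)
    (a : 𝒜) (y : TrivSqZeroExt 𝒜 ℳ) :
    htilde k 𝒜 ℳ h (inl a * y) = htilde k 𝒜 ℳ h (inl a) * y + inl a * htilde k 𝒜 ℳ h y := by
  ext <;> simp [htilde, snd_mul, hleft]

omit [CharZero k] [SMulCommClass 𝒜 𝒜ᵐᵒᵖ ℳ] in
/-- The `ℳ`-component of the right-hand side is `h m • y.snd - op (h y.snd) • m`, which
vanishes by `hcomm`. -/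
theorem htilde_inr_mul {h : ℳ →ₗ[k] 𝒜}
    (hright : ∀ (a : 𝒜) (m : ℳ), h (MulOpposite.op a • m) = h m * a)
    (hcomm : ∀ m₁ m₂ : ℳ, h m₁ • m₂ = MulOpposite.op (h m₂) • m₁)
    (m : ℳ) (y : TrivSqZeroExt 𝒜 ℳ) :
    htilde k 𝒜 ℳ h (inr m * y) = htilde k 𝒜 ℳ h (inr m) * y - inr m * htilde k 𝒜 ℳ h y := by
  ext
  · simp [htilde, snd_mul, hright]
  · simp [htilde, snd_mul, hcomm]

end

/-- Let `h : ℳ → 𝒜` be an injective `𝒜`-bimodule homomorphism. Then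
`h(m₁)m₂ = m₁h(m₂)` for all `m₁, m₂ ∈ ℳ`, and consequently the map
`h̃(a,m) = (h(m),0)` on the trivial extension `A = 𝒜 ⊕ ℳ` squares to zero and is a
graded derivation of degree `−1`: `h̃(xy) = h̃(x)y + (−1)^p x h̃(y)` for `x ∈ A_p`
(`p = 0` for `x = (a,0)`, `p = 1` for `x = (0,m)`). -/
theorem htilde_is_square_zero_derivation (h : ℳ →ₗ[k] 𝒜)
    (hleft : ∀ (a : 𝒜) (m : ℳ), h (a • m) = a * h m)
    (hright : ∀ (a : 𝒜) (m : ℳ), h (MulOpposite.op a • m) = h m * a)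
    (hinj : Function.Injective h) :
    (∀ m₁ m₂ : ℳ, (h m₁) • m₂ = (MulOpposite.op (h m₂)) • m₁) ∧
    (∀ x : TrivSqZeroExt 𝒜 ℳ, htilde k 𝒜 ℳ h (htilde k 𝒜 ℳ h x) = 0) ∧
    (∀ (a : 𝒜) (y : TrivSqZeroExt 𝒜 ℳ),
      htilde k 𝒜 ℳ h (inl a * y) =
        htilde k 𝒜 ℳ h (inl a) * y + inl a * htilde k 𝒜 ℳ h y) ∧
    (∀ (m : ℳ) (y : TrivSqZeroExt 𝒜 ℳ),
      htilde k 𝒜 ℳ h (inr m * y) =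
        htilde k 𝒜 ℳ h (inr m) * y - inr m * htilde k 𝒜 ℳ h y) := by
  have hcomm := apply_smul_eq_op_apply_smul_of_injective hleft hright hinj
  exact ⟨hcomm, htilde_htilde h, htilde_inl_mul hleft, htilde_inr_mul hright hcomm⟩

end InnerDef
end
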